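/- Let R be a commutative ring, 𝔞 an ideal, S a multiplicative subset, and M, N R-modules. If M ⊗_R N is 𝔞-coreduced, then S⁻¹M ⊗_{S⁻¹R} S⁻¹N is S⁻¹𝔞-coreduced; consequently, if N is 𝔞-coreduced with respect to M, then S⁻¹N is S⁻¹𝔞-coreduced with respect to S⁻¹M. -/

import Mathlib

open TensorProduct

/-- A module `P` over a commutative ring `A` is `𝔟`-coreduced if `𝔟²P = 𝔟P`. -/
def IsACoreduced {A : Type*} [CommRing A] (𝔟 : Ideal A) (P : Type*) [AddCommGroup P]
    [Module A P] : Prop :=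
  (𝔟 ^ 2) • (⊤ : Submodule A P) = 𝔟 • (⊤ : Submodule A P)

lemma isACoreduced_congr {A : Type*} [CommRing A] (𝔟 : Ideal A) {P Q : Type*}
    [AddCommGroup P] [Module A P] [AddCommGroup Q] [Module A Q] (e : P ≃ₗ[A] Q)
    (h : IsACoreduced 𝔟 P) : IsACoreduced 𝔟 Q := by
  unfold IsACoreduced at *
  have htop : (⊤ : Submodule A P).map (e : P →ₗ[A] Q) = ⊤ := by
    rw [Submodule.map_top, LinearEquiv.range]
  calc 𝔟 ^ 2 • (⊤ : Submodule A Q) = 𝔟 ^ 2 • (⊤ : Submodule A P).map (e : P →ₗ[A] Q) := by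
        rw [htop]
    _ = (𝔟 ^ 2 • (⊤ : Submodule A P)).map (e : P →ₗ[A] Q) := (Submodule.map_smul'' _ _ _).symm
    _ = (𝔟 • (⊤ : Submodule A P)).map (e : P →ₗ[A] Q) := by rw [h]
    _ = 𝔟 • (⊤ : Submodule A P).map (e : P →ₗ[A] Q) := Submodule.map_smul'' _ _ _
    _ = 𝔟 • ⊤ := by rw [htop]

lemma smul_top_baseChange {R A : Type*} [CommRing R] [CommRing A] [Algebra R A]
    (𝔞 : Ideal R) (P : Type*) [AddCommGroup P] [Module R P] :
    (𝔞.map (algebraMap R A)) • (⊤ : Submodule A (A ⊗[R] P)) =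
      (𝔞 • (⊤ : Submodule R P)).baseChange A := by
  apply le_antisymm
  · refine Submodule.smul_le.2 fun b hb x _ ↦ ?_
    refine Submodule.span_induction
      (p := fun b _ ↦ ∀ x : A ⊗[R] P, b • x ∈ (𝔞 • (⊤ : Submodule R P)).baseChange A)
      ?_ ?_ ?_ ?_ hb x
    · rintro - ⟨a, ha, rfl⟩ x
      induction x with
      | zero => simp
      | tmul c p =>
        rw [algebraMap_smul, ← TensorProduct.tmul_smul]
        exact Submodule.tmul_mem_baseChange_of_mem _
          (Submodule.smul_mem_smul ha Submodule.mem_top)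
      | add x y hx hy =>
        rw [smul_add]
        exact Submodule.add_mem _ hx hy
    · intro x; simp only [zero_smul]; exact Submodule.zero_mem _
    · intro b c _ _ hb hc x
      rw [add_smul]
      exact Submodule.add_mem _ (hb x) (hc x)
    · intro a b _ hb x
      rw [smul_eq_mul, mul_smul]
      exact Submodule.smul_mem _ _ (hb x)
  · rw [Submodule.baseChange_eq_span, Submodule.span_le]
    rintro - ⟨m, hm, rfl⟩
    refine Submodule.smul_induction_on
      (p := fun m ↦ TensorProduct.mk R A P 1 m ∈
        (𝔞.map (algebraMap R A)) • (⊤ : Submodule A (A ⊗[R] P)))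
      hm (fun a ha p _ ↦ ?_) (fun x y hx hy ↦ ?_)
    · simp only [TensorProduct.mk_apply]
      rw [TensorProduct.tmul_smul, ← algebraMap_smul A a]
      exact Submodule.smul_mem_smul (Ideal.mem_map_of_mem _ ha) Submodule.mem_top
    · simpa only [TensorProduct.mk_apply, TensorProduct.tmul_add] using
        Submodule.add_mem _ hx hy

lemma isACoreduced_baseChange {R A : Type*} [CommRing R] [CommRing A] [Algebra R A]
    (𝔞 : Ideal R) (P : Type*) [AddCommGroup P] [Module R P]
    (h : IsACoreduced 𝔞 P) :
    IsACoreduced (𝔞.map (algebraMap R A)) (A ⊗[R] P) := by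
  unfold IsACoreduced at *
  rw [← Ideal.map_pow, smul_top_baseChange, smul_top_baseChange, h]

/-- if `M ⊗_R N` is `𝔞`-coreduced, then
`S⁻¹M ⊗_{S⁻¹R} S⁻¹N` is `S⁻¹𝔞`-coreduced, i.e. `S⁻¹N` is `S⁻¹𝔞`-coreduced with respect
to `S⁻¹M`. -/
theorem localized_isACoreduced_wrt {R : Type*} [CommRing R] (𝔞 : Ideal R)
    (S : Submonoid R) (M N : Type*) [AddCommGroup M] [Module R M]
    [AddCommGroup N] [Module R N]
    (h : IsACoreduced 𝔞 (M ⊗[R] N)) :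
    IsACoreduced (𝔞.map (algebraMap R (Localization S)))
      ((LocalizedModule S M) ⊗[Localization S] (LocalizedModule S N)) := by
  set A := Localization S
  let eM : A ⊗[R] M ≃ₗ[A] LocalizedModule S M :=
    ((IsLocalizedModule.isBaseChange S A (LocalizedModule.mkLinearMap S M)).equiv)
  let eN : A ⊗[R] N ≃ₗ[A] LocalizedModule S N :=
    ((IsLocalizedModule.isBaseChange S A (LocalizedModule.mkLinearMap S N)).equiv)
  let e : A ⊗[R] (M ⊗[R] N) ≃ₗ[A] (LocalizedModule S M) ⊗[A] (LocalizedModule S N) :=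
    (TensorProduct.AlgebraTensorModule.distribBaseChange R A M N).trans
      (TensorProduct.congr eM eN)
  exact isACoreduced_congr _ e (isACoreduced_baseChange 𝔞 _ h)
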